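/- Given a sequence x : ℕ → Σ and functions μ, φ : Σ → ℝ, define c(0) = 0 and c(t) = φ(x_t)·c(t-1) + μ(x_t) for t ≥ 1. Then c(t) equals the score assigned by the WFSA B (with weight functions μ and φ) to the prefix x_1…x_t, for every t ≥ 1. -/
import Mathlib


/-- Transition weights of the two-state WFSA `B` over the real semiring. -/
def bTau {A : Type*} (μ φ : A → ℝ) : Fin 2 → Fin 2 → A → ℝ := fun q q' a =>
  if q = 0 ∧ q' = 0 then 1
  else if q = 0 ∧ q' = 1 then μ a
  else if q = 1 ∧ q' = 1 then φ a
  else 0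

/-- Score assigned by WFSA `B` (initial weight 1 on `q0`, final weight 1 on `q1`)
to the prefix `x_1 … x_t`, as a sum over all paths of products of weights. -/
noncomputable def bScore {A : Type*} (μ φ : A → ℝ) (x : ℕ → A) (t : ℕ) : ℝ :=
  ∑ p : Fin (t + 1) → Fin 2,
    (if p 0 = 0 then (1 : ℝ) else 0) *
      (∏ i : Fin t, bTau μ φ (p i.castSucc) (p i.succ) (x (i.1 + 1))) *
      (if p (Fin.last t) = 1 then (1 : ℝ) else 0)


set_option maxHeartbeats 800000 in
noncomputable def S {A : Type*} (μ φ : A → ℝ) (x : ℕ → A) (t : ℕ) (qf : Fin 2) : ℝ :=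
  ∑ p : Fin (t + 1) → Fin 2,
    (if p 0 = 0 then (1 : ℝ) else 0) *
      (∏ i : Fin t, bTau μ φ (p i.castSucc) (p i.succ) (x (i.1 + 1))) *
      (if p (Fin.last t) = qf then (1 : ℝ) else 0)

lemma S_succ {A : Type*} (μ φ : A → ℝ) (x : ℕ → A) (t : ℕ) (qf : Fin 2) :
    S μ φ x (t+1) qf = ∑ q : Fin 2, S μ φ x t q * bTau μ φ q qf (x (t+1)) := by
  have key : S μ φ x (t+1) qf = ∑ pq : Fin 2 × (Fin (t+1) → Fin 2),
      (if (Fin.snoc pq.2 pq.1 : Fin (t+2) → Fin 2) 0 = 0 then (1:ℝ) else 0) *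
      (∏ i : Fin (t+1), bTau μ φ ((Fin.snoc pq.2 pq.1 : Fin (t+2) → Fin 2) i.castSucc) ((Fin.snoc pq.2 pq.1 : Fin (t+2) → Fin 2) i.succ) (x (i.1 + 1))) *
      (if (Fin.snoc pq.2 pq.1 : Fin (t+2) → Fin 2) (Fin.last (t+1)) = qf then (1:ℝ) else 0) := by
    rw [S]
    exact (Fintype.sum_equiv (Fin.snocEquiv fun _ => Fin 2) _ _ fun pq => rfl).symm
  rw [key, Fintype.sum_prod_type]
  have step : ∀ q : Fin 2,
      (∑ p : Fin (t+1) → Fin 2,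
        (if (Fin.snoc p q : Fin (t+2) → Fin 2) 0 = 0 then (1:ℝ) else 0) *
        (∏ i : Fin (t+1), bTau μ φ ((Fin.snoc p q : Fin (t+2) → Fin 2) i.castSucc) ((Fin.snoc p q : Fin (t+2) → Fin 2) i.succ) (x (i.1 + 1))) *
        (if (Fin.snoc p q : Fin (t+2) → Fin 2) (Fin.last (t+1)) = qf then (1:ℝ) else 0))
      = ∑ p : Fin (t+1) → Fin 2,
        ((if p 0 = 0 then (1:ℝ) else 0) *
        (∏ i : Fin t, bTau μ φ (p i.castSucc) (p i.succ) (x (i.1 + 1)))) *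
        (bTau μ φ (p (Fin.last t)) q (x (t+1))) * (if q = qf then (1:ℝ) else 0) := by
    intro q
    refine Finset.sum_congr rfl fun p _ => ?_
    rw [Fin.prod_univ_castSucc]
    have h0 : (Fin.snoc p q : Fin (t+2) → Fin 2) 0 = p 0 := by
      rw [show (0 : Fin (t+2)) = Fin.castSucc 0 from rfl, Fin.snoc_castSucc]
    have hlast : (Fin.snoc p q : Fin (t+2) → Fin 2) (Fin.last (t+1)) = q := by simp
    have hmid : ∀ j : Fin t,
        bTau μ φ ((Fin.snoc p q : Fin (t+2) → Fin 2) j.castSucc.castSucc)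
          ((Fin.snoc p q : Fin (t+2) → Fin 2) j.castSucc.succ) (x (j.castSucc.1 + 1))
        = bTau μ φ (p j.castSucc) (p j.succ) (x (j.1 + 1)) := by
      intro j
      rw [Fin.succ_castSucc, Fin.snoc_castSucc, Fin.snoc_castSucc, Fin.coe_castSucc]
    have hend : bTau μ φ ((Fin.snoc p q : Fin (t+2) → Fin 2) (Fin.last t).castSucc)
          ((Fin.snoc p q : Fin (t+2) → Fin 2) (Fin.last t).succ) (x ((Fin.last t).1 + 1))
        = bTau μ φ (p (Fin.last t)) q (x (t+1)) := by
      rw [Fin.snoc_castSucc, Fin.succ_last, Fin.snoc_last, Fin.val_last]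
    rw [h0, hlast, Finset.prod_congr rfl fun j _ => hmid j, hend]
    ring
  rw [Finset.sum_congr rfl fun q _ => step q]
  -- now kill the q sum via indicator
  have expand : ∀ p : Fin (t+1) → Fin 2, ∀ q : Fin 2,
      bTau μ φ (p (Fin.last t)) q (x (t+1))
      = ∑ r : Fin 2, (if p (Fin.last t) = r then (1:ℝ) else 0) * bTau μ φ r q (x (t+1)) := by
    intro p q
    simp
  calc ∑ q : Fin 2, ∑ p : Fin (t+1) → Fin 2,
        ((if p 0 = 0 then (1:ℝ) else 0) *
        (∏ i : Fin t, bTau μ φ (p i.castSucc) (p i.succ) (x (i.1 + 1)))) *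
        (bTau μ φ (p (Fin.last t)) q (x (t+1))) * (if q = qf then (1:ℝ) else 0)
      = ∑ q : Fin 2, ∑ p : Fin (t+1) → Fin 2, ∑ r : Fin 2,
        (((if p 0 = 0 then (1:ℝ) else 0) *
        (∏ i : Fin t, bTau μ φ (p i.castSucc) (p i.succ) (x (i.1 + 1)))) *
        (if p (Fin.last t) = r then (1:ℝ) else 0)) * bTau μ φ r q (x (t+1)) * (if q = qf then (1:ℝ) else 0) := by
        refine Finset.sum_congr rfl fun q _ => Finset.sum_congr rfl fun p _ => ?_
        rw [expand p q, Finset.mul_sum, Finset.sum_mul]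
        exact Finset.sum_congr rfl fun r _ => by ring
    _ = ∑ q : Fin 2, ∑ r : Fin 2, (S μ φ x t r) * bTau μ φ r q (x (t+1)) * (if q = qf then (1:ℝ) else 0) := by
        refine Finset.sum_congr rfl fun q _ => ?_
        rw [Finset.sum_comm]
        refine Finset.sum_congr rfl fun r _ => ?_
        rw [S, Finset.sum_mul, Finset.sum_mul]
    _ = ∑ r : Fin 2, (S μ φ x t r) * bTau μ φ r qf (x (t+1)) := by
        rw [Finset.sum_comm]
        refine Finset.sum_congr rfl fun r _ => ?_
        simp


lemma S_zero {A : Type*} (μ φ : A → ℝ) (x : ℕ → A) (qf : Fin 2) :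
    S μ φ x 0 qf = if qf = 0 then 1 else 0 := by
  have he := Fintype.sum_equiv (Equiv.funUnique (Fin 1) (Fin 2))
    (fun p : Fin (0+1) → Fin 2 =>
      ((if p 0 = 0 then (1:ℝ) else 0) *
        ∏ i : Fin 0, bTau μ φ (p i.castSucc) (p i.succ) (x (i.1 + 1))) *
      (if p (Fin.last 0) = qf then (1:ℝ) else 0))
    (fun q : Fin 2 => (if q = 0 then (1:ℝ) else 0) * (if q = qf then 1 else 0))
    (fun p => by simp [Fin.last])
  rw [S, he]
  fin_cases qf <;> simp [Fin.sum_univ_succ]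

lemma S_tau {A : Type*} (μ φ : A → ℝ) (x : ℕ → A) (t : ℕ) :
    S μ φ x t 0 = 1 ∧ S μ φ x t 1 = (if t = 0 then 0 else φ (x t) * S μ φ x (t-1) 1 + μ (x t)) := by
  induction t with
  | zero => simp [S_zero]
  | succ n ih =>
    constructor
    · rw [S_succ, Fin.sum_univ_two, ih.1, bTau, bTau]
      norm_num
    · rw [S_succ, Fin.sum_univ_two, ih.1, bTau, bTau]
      norm_num
      ring


/-- Proposition 1: the simplified gated RNN recurrence
`c(t) = φ(x_t)·c(t-1) + μ(x_t)`, `c(0) = 0`, equals the score assigned by the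
WFSA `B` to the prefix `x_1 … x_t`, for every `t ≥ 1`. -/
theorem stmt2 {A : Type*} [Fintype A] (μ φ : A → ℝ) (x : ℕ → A) (c : ℕ → ℝ)
    (h0 : c 0 = 0) (hrec : ∀ t, 1 ≤ t → c t = φ (x t) * c (t - 1) + μ (x t)) :
    ∀ t, 1 ≤ t → c t = bScore μ φ x t := by
  have hb : ∀ t, bScore μ φ x t = S μ φ x t 1 := fun t => rfl
  intro t ht
  induction t with
  | zero => omega
  | succ n ih =>
    rw [hb, (S_tau μ φ x (n+1)).2]
    simp only [Nat.add_sub_cancel, Nat.succ_ne_zero, if_false]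
    rcases Nat.eq_zero_or_pos n with h | h
    · subst h
      rw [hrec 1 le_rfl]
      simp [h0, (S_tau μ φ x 0).2]
    · rw [hrec (n+1) (by omega)]
      simp only [Nat.add_sub_cancel]
      rw [ih h, hb]
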